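/- arXiv:0912.3609 — 3 statements merged into one kernel-verified Lean document; each statement's English description precedes it below -/
import Mathlib

section
/- For every nonnegative integer s, v_{2s} - 2 = m·(m+4)·u_s², where u and v satisfy the recurrences u_0 = 0, u_1 = 1, v_0 = 2, v_1 = m+2, and x_p = (m+2)x_{p-1} - x_{p-2}. -/
/-!
Write `a = m + 2`, so that `a² - 4 = m (m + 4)`. By Cassini's identity
`u s * u (s + 2) = u (s + 1)² - 1`, the pair `v (2s) - 2 = (a² - 4) u_s²`,
`v (2s + 1) - a = (a² - 4) u_s u_{s+1}` propagates from `s` to `s + 1`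
along two steps of the recurrence.
-/

section LucasSequence

variable {R : Type*} [CommRing R] {a : R} {u v : ℕ → R}

theorem lucas_cassini (hu0 : u 0 = 0) (hu1 : u 1 = 1)
    (hu : ∀ n, u (n + 2) = a * u (n + 1) - u n) (n : ℕ) :
    u n * u (n + 2) = u (n + 1) ^ 2 - 1 := by
  induction n with
  | zero => rw [hu 0, hu0, hu1]; ring
  | succ n ih =>
    rw [hu (n + 1)]
    linear_combination ih - u (n + 2) * hu n

theorem lucas_v_two_mul_sub (hu0 : u 0 = 0) (hu1 : u 1 = 1)
    (hu : ∀ n, u (n + 2) = a * u (n + 1) - u n)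
    (hv0 : v 0 = 2) (hv1 : v 1 = a) (hv : ∀ n, v (n + 2) = a * v (n + 1) - v n) (s : ℕ) :
    v (2 * s) - 2 = (a ^ 2 - 4) * u s ^ 2 ∧
      v (2 * s + 1) - a = (a ^ 2 - 4) * (u s * u (s + 1)) := by
  induction s with
  | zero => simp [hv0, hv1, hu0]
  | succ n ih =>
    obtain ⟨h_even, h_odd⟩ := ih
    have h_even' : v (2 * (n + 1)) - 2 = (a ^ 2 - 4) * u (n + 1) ^ 2 := by
      rw [show 2 * (n + 1) = 2 * n + 2 by ring, hv (2 * n)]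
      linear_combination a * h_odd - h_even + (a ^ 2 - 4) * lucas_cassini hu0 hu1 hu n -
        (a ^ 2 - 4) * u n * hu n
    refine ⟨h_even', ?_⟩
    rw [show 2 * (n + 1) + 1 = 2 * n + 1 + 2 by ring, hv (2 * n + 1),
      show 2 * n + 1 + 1 = 2 * (n + 1) by ring]
    linear_combination a * h_even' - h_odd - (a ^ 2 - 4) * u (n + 1) * hu n

end LucasSequence

theorem stmt7_general (m : ℕ) (u v : ℕ → ℤ)
    (hu0 : u 0 = 0) (hu1 : u 1 = 1)
    (hurec : ∀ p, 2 ≤ p → u p = (m + 2) * u (p - 1) - u (p - 2))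
    (hv0 : v 0 = 2) (hv1 : v 1 = m + 2)
    (hvrec : ∀ p, 2 ≤ p → v p = (m + 2) * v (p - 1) - v (p - 2)) :
    ∀ s : ℕ, v (2 * s) - 2 = m * (m + 4) * (u s) ^ 2 := by
  intro s
  have hu : ∀ n, u (n + 2) = (m + 2) * u (n + 1) - u n := fun n => by
    simpa using hurec (n + 2) (by omega)
  have hv : ∀ n, v (n + 2) = (m + 2) * v (n + 1) - v n := fun n => by
    simpa using hvrec (n + 2) (by omega)
  rw [(lucas_v_two_mul_sub hu0 hu1 hu hv0 hv1 hv s).1]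
  ring

/-- For every nonnegative integer `s`, `v (2s) - 2 = m * (m+4) * (u s)²`. -/
theorem stmt7 (m : ℕ) (hm : 1 ≤ m) (u v : ℕ → ℤ)
    (hu0 : u 0 = 0) (hu1 : u 1 = 1)
    (hurec : ∀ p, 2 ≤ p → u p = (m + 2) * u (p - 1) - u (p - 2))
    (hv0 : v 0 = 2) (hv1 : v 1 = m + 2)
    (hvrec : ∀ p, 2 ≤ p → v p = (m + 2) * v (p - 1) - v (p - 2)) :
    ∀ s : ℕ, v (2 * s) - 2 = m * (m + 4) * (u s) ^ 2 :=
  stmt7_general m u v hu0 hu1 hurec hv0 hv1 hvrec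
end

section
/- Let n = 2s and B = [[n, τ_{n-1}, τ_n],[0, τ_n - τ_{n-1}, τ_{n+1} - τ_n],[0, u_n, u_{n+1} - 1]]. Then the gcd of all entries of B equals gcd(u_s, 2τ_s). -/
/-!
Write `c = m + 2`, `a = u s`, `x = u (s + 1)`. The doubling formulas
`u (2s) = a (2x - c a)`, `u (2s + 1) - 1 = a (c x - 2a)`,
`τ (2s) = 2 τ s + a (a + 2 (τ (s + 1) - τ s))` and `τ (2s + 1) - τ (2s) = -a (x + a)`,
together with `2s = m (2 τ s) + 2a` and the recurrence `τ (k + 2) = c τ (k + 1) - τ k - (k + 1)`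
for `τ (2s - 1)`, make every entry of `B` a `ℤ`-combination of `a` and `2 τ s`. Conversely the
invariant `x² - c a x + a² = 1` recovers `2a` from `u (2s)` and `u (2s + 1) - 1`, then `a` from
these and `τ (2s + 1) - τ (2s)`, and finally `2 τ s` from `τ (2s)`.
-/

structure IsLucasU (c : ℤ) (u : ℕ → ℤ) : Prop where
  zero : u 0 = 0
  one : u 1 = 1
  add_two : ∀ k, u (k + 2) = c * u (k + 1) - u k

namespace IsLucasU

variable {c : ℤ} {u : ℕ → ℤ}

theorem sq_sub_mul_add_sq (h : IsLucasU c u) (p : ℕ) :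
    u (p + 1) ^ 2 - c * u p * u (p + 1) + u p ^ 2 = 1 := by
  induction p with
  | zero => simp [h.zero, h.one]
  | succ p ih => rw [h.add_two p]; linear_combination ih

theorem add (h : IsLucasU c u) (j k : ℕ) :
    u (j + k) = u j * u (k + 1) + u (j + 1) * u k - c * u j * u k := by
  induction k using Nat.twoStepInduction with
  | zero => simp [h.zero, h.one]
  | one => simp [h.add_two 0, h.zero, h.one]; ring
  | more k ih₀ ih₁ =>
    have hj := h.add_two (j + k)
    rw [show j + k + 1 = j + (k + 1) by ring] at hj
    rw [← add_assoc, hj, ih₁, ih₀, h.add_two (k + 1), h.add_two k]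
    ring

theorem two_mul (h : IsLucasU c u) (s : ℕ) : u (2 * s) = u s * (2 * u (s + 1) - c * u s) := by
  rw [_root_.two_mul, h.add]; ring

theorem two_mul_add_one_sub_one (h : IsLucasU c u) (s : ℕ) :
    u (2 * s + 1) - 1 = u s * (c * u (s + 1) - 2 * u s) := by
  rw [show 2 * s + 1 = s + (s + 1) by ring, h.add, h.add_two]
  linear_combination h.sq_sub_mul_add_sq s

end IsLucasU

section Tau

variable {m : ℤ} {u τ : ℕ → ℤ}

theorem tau_add_two (h : IsLucasU (m + 2) u) (hm : m ≠ 0) (hτ : ∀ p : ℕ, m * τ p = p - u p)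
    (k : ℕ) : τ (k + 2) = (m + 2) * τ (k + 1) - τ k - (k + 1) := by
  apply mul_left_cancel₀ hm
  have h₂ := hτ (k + 2)
  have h₁ := hτ (k + 1)
  have h₀ := hτ k
  push_cast at h₂ h₁
  rw [h.add_two] at h₂
  linear_combination h₂ - (m + 2) * h₁ + h₀

theorem tau_two_mul (h : IsLucasU (m + 2) u) (hm : m ≠ 0) (hτ : ∀ p : ℕ, m * τ p = p - u p)
    (s : ℕ) : τ (2 * s) = 2 * τ s + u s * (u s + 2 * (τ (s + 1) - τ s)) := by
  apply mul_left_cancel₀ hm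
  have h₂ := hτ (2 * s)
  have h₁ := hτ (s + 1)
  push_cast at h₂ h₁
  rw [h.two_mul] at h₂
  linear_combination h₂ - 2 * hτ s - 2 * u s * h₁ + 2 * u s * hτ s

theorem tau_two_mul_add_one_sub (h : IsLucasU (m + 2) u) (hm : m ≠ 0)
    (hτ : ∀ p : ℕ, m * τ p = p - u p) (s : ℕ) :
    τ (2 * s + 1) - τ (2 * s) = -(u s * (u (s + 1) + u s)) := by
  apply mul_left_cancel₀ hm
  have h₁ := hτ (2 * s + 1)
  have h₀ := hτ (2 * s)
  push_cast at h₁ h₀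
  linear_combination h₁ - h₀ - h.two_mul_add_one_sub_one s + h.two_mul s

theorem dvd_doubling_entries (h : IsLucasU (m + 2) u) (hm : m ≠ 0)
    (hτ : ∀ p : ℕ, m * τ p = p - u p) {d : ℤ} {s : ℕ} (hs : 1 ≤ s)
    (ha : d ∣ u s) (ht : d ∣ 2 * τ s) :
    d ∣ ((2 * s : ℕ) : ℤ) ∧ d ∣ τ (2 * s - 1) ∧ d ∣ τ (2 * s) ∧ d ∣ τ (2 * s) - τ (2 * s - 1) ∧
      d ∣ τ (2 * s + 1) - τ (2 * s) ∧ d ∣ u (2 * s) ∧ d ∣ u (2 * s + 1) - 1 := by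
  have hn : ((2 * s : ℕ) : ℤ) = m * (2 * τ s) + 2 * u s := by
    push_cast; linear_combination -2 * hτ s
  have hτn : d ∣ τ (2 * s) :=
    tau_two_mul h hm hτ s ▸ dvd_add ht (ha.mul_right _)
  have hΔ : d ∣ τ (2 * s + 1) - τ (2 * s) :=
    tau_two_mul_add_one_sub h hm hτ s ▸ (ha.mul_right _).neg_right
  have hdn : d ∣ ((2 * s : ℕ) : ℤ) := hn ▸ dvd_add (ht.mul_left _) (ha.mul_left _)
  have hτpred : τ (2 * s - 1) =
      (m + 1) * τ (2 * s) - (τ (2 * s + 1) - τ (2 * s)) - ((2 * s : ℕ) : ℤ) := by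
    have hrec := tau_add_two h hm hτ (2 * s - 1)
    rw [show 2 * s - 1 + 2 = 2 * s + 1 by omega, show 2 * s - 1 + 1 = 2 * s by omega] at hrec
    have : ((2 * s - 1 : ℕ) : ℤ) + 1 = ((2 * s : ℕ) : ℤ) := by omega
    linear_combination hrec - this
  have hdτpred : d ∣ τ (2 * s - 1) := hτpred ▸ dvd_sub (dvd_sub (hτn.mul_left _) hΔ) hdn
  exact ⟨hdn, hdτpred, hτn, dvd_sub hτn hdτpred, hΔ, h.two_mul s ▸ ha.mul_right _,
    h.two_mul_add_one_sub_one s ▸ ha.mul_right _⟩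

theorem dvd_of_dvd_doubling_entries (h : IsLucasU (m + 2) u) (hm : m ≠ 0)
    (hτ : ∀ p : ℕ, m * τ p = p - u p) {d : ℤ} {s : ℕ} (hτn : d ∣ τ (2 * s))
    (hΔ : d ∣ τ (2 * s + 1) - τ (2 * s)) (hu : d ∣ u (2 * s)) (hu' : d ∣ u (2 * s + 1) - 1) :
    d ∣ u s ∧ d ∣ 2 * τ s := by
  set a := u s
  set x := u (s + 1)
  rw [h.two_mul] at hu
  rw [h.two_mul_add_one_sub_one] at hu'
  rw [tau_two_mul_add_one_sub h hm hτ, dvd_neg] at hΔ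
  have hinv := h.sq_sub_mul_add_sq s
  have h2a : d ∣ 2 * a := by
    have e : 2 * a = x * (a * (2 * x - (m + 2) * a)) - a * (a * ((m + 2) * x - 2 * a)) := by
      linear_combination -2 * a * hinv
    exact e ▸ dvd_sub (hu.mul_left _) (hu'.mul_left _)
  have ha : d ∣ a := by
    have e : a = (x + a) * (a * (x + a)) - a * (a * ((m + 2) * x - 2 * a))
        - (a * a + a * x) * (2 * a) := by
      linear_combination -a * hinv
    exact e ▸ dvd_sub (dvd_sub (hΔ.mul_left _) (hu'.mul_left _)) (h2a.mul_left _)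
  refine ⟨ha, ?_⟩
  have e : 2 * τ s = τ (2 * s) - a * (a + 2 * (τ (s + 1) - τ s)) := by
    rw [tau_two_mul h hm hτ]; ring
  exact e ▸ dvd_sub hτn (ha.mul_right _)

end Tau

/-- For `n = 2s`, the gcd of all entries of
`B = [[n, τ (n-1), τ n],[0, τ n - τ (n-1), τ (n+1) - τ n],[0, u n, u (n+1) - 1]]`
equals `gcd (u s, 2·τ s)`. -/
theorem stmt16 (m s : ℕ) (hm : 1 ≤ m) (hs : 1 ≤ s) (n : ℕ) (hn : n = 2 * s)
    (u τ : ℕ → ℤ)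
    (hu0 : u 0 = 0) (hu1 : u 1 = 1)
    (hurec : ∀ p, 2 ≤ p → u p = (m + 2) * u (p - 1) - u (p - 2))
    (hτ : ∀ p : ℕ, (m : ℤ) * τ p = (p : ℤ) - u p) :
    Int.gcd (Int.gcd (Int.gcd (Int.gcd (Int.gcd (Int.gcd (Int.gcd (Int.gcd
        ((n : ℤ)) (τ (n - 1))) (τ n)) 0) (τ n - τ (n - 1))) (τ (n + 1) - τ n)) 0)
        (u n)) (u (n + 1) - 1)
      = Int.gcd (u s) (2 * τ s) := by
  subst hn
  have hm0 : (m : ℤ) ≠ 0 := by omega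
  have hu : IsLucasU (m + 2) u := ⟨hu0, hu1, fun k => by simpa using hurec (k + 2) (by omega)⟩
  refine eq_of_forall_dvd' fun d => ?_
  simp only [Int.dvd_gcd_iff, Int.natCast_dvd_natCast, dvd_zero, and_true, and_assoc]
  constructor
  · rintro ⟨-, -, hτn, -, hΔ, hun, hun'⟩
    exact dvd_of_dvd_doubling_entries hu hm0 hτ hτn hΔ hun hun'
  · rintro ⟨ha, ht⟩
    exact (dvd_doubling_entries hu hm0 hτ hs ha ht).imp_left Int.natCast_dvd_natCast.mp
end

section
/- Let B = [[n, τ_{n-1}, τ_n],[0, τ_n - τ_{n-1}, τ_{n+1} - τ_n],[0, u_n, u_{n+1} - 1]]. Then det B = (n/m)·(v_n - 2). In particular, det B = n·h_s² when n = 2s+1 and det B = n(m+4)u_s² when n = 2s, where h_s = u_s + u_{s+1}. -/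
/-!
With `a = m + 2`, the sequences are evaluations of Mathlib's rescaled Chebyshev polynomials:
`u p = S_{p-1}(a)` and `v p = C_p(a)`. Since `m τ p = p - u p`, multiplying the `2 × 2` minor of `B`
by `m` leaves a quadratic expression in `u (n-1), u n, u (n+1)`, which the Cassini identity
`S_{n-1}² + S_n² - X S_{n-1} S_n = 1` turns into `C_n - 2`. The two special cases come from
`C_s² = C_{2s} + 2` and `C_{s+1} C_s = C_{2s+1} + X`, again reduced with the Cassini identity.
-/

open Polynomial Polynomial.Chebyshev

theorem eq_of_add_two_eq {R : Type*} [CommRing R] {a b : R} {f g : ℕ → R}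
    (hf : ∀ p, f (p + 2) = a * f (p + 1) + b * f p)
    (hg : ∀ p, g (p + 2) = a * g (p + 1) + b * g p)
    (h0 : f 0 = g 0) (h1 : f 1 = g 1) : f = g := by
  funext p
  induction p using Nat.twoStepInduction with
  | zero => exact h0
  | one => exact h1
  | more p ih0 ih1 => rw [hf, hg, ih0, ih1]

theorem Matrix.det_fin_three_block_triangular {R : Type*} [CommRing R] (a b c d e f g : R) :
    !![a, b, c; 0, d, e; 0, f, g].det = a * (d * g - e * f) := by
  rw [Matrix.det_fin_three]
  simp only [Matrix.of_apply, Matrix.cons_val', Matrix.cons_val_zero, Matrix.cons_val_one,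
    Matrix.cons_val, Matrix.cons_val_fin_one]
  ring

namespace Polynomial.Chebyshev

variable (R : Type*) [CommRing R]

theorem C_sub_two_eq_S_minor (n : ℤ) :
    C R n - 2 = (1 - S R (n - 1) + S R (n - 2)) * (S R n - 1)
      - (1 - S R n + S R (n - 1)) * S R (n - 1) := by
  linear_combination (norm := ring_nf) C_eq_S_sub_X_mul_S R n + (1 - S R (n - 2)) * S_eq R n
    + S_sq_add_S_sq R (n - 2)

theorem C_two_mul_sub_two (s : ℤ) : C R (2 * s) - 2 = (X ^ 2 - 4) * S R (s - 1) ^ 2 := by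
  linear_combination (norm := ring_nf) -(C_mul_C R s s) - C_zero R
    + (C R s + 2 * S R s - X * S R (s - 1)) * C_eq_S_sub_X_mul_S R s + 4 * S_sq_add_S_sq R (s - 1)

theorem C_two_mul_add_one_sub_two (s : ℤ) :
    C R (2 * s + 1) - 2 = (X - 2) * (S R s + S R (s - 1)) ^ 2 := by
  linear_combination (norm := ring_nf) -(C_mul_C R (s + 1) s) - C_one R
    + C R s * C_eq_S_sub_X_mul_S R (s + 1)
    + (2 * S R (s + 1) - X * S R s) * C_eq_S_sub_X_mul_S R s
    + 2 * (2 * S R s - X * S R (s - 1)) * S_add_one R s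
    + (X + 2) * S_sq_add_S_sq R (s - 1)

variable {R}

theorem eq_eval_S_sub_one_of_add_two_eq {a : R} {u : ℕ → R} (h0 : u 0 = 0) (h1 : u 1 = 1)
    (h : ∀ p, u (p + 2) = a * u (p + 1) - u p) :
    u = fun p : ℕ => (S R ((p : ℤ) - 1)).eval a := by
  refine eq_of_add_two_eq (b := -1) (fun p => by rw [h]; ring) (fun p => ?_) (by simp [h0])
    (by simp [h1])
  have hS := congrArg (eval a) (S_add_two R ((p : ℤ) - 1))
  simp only [eval_sub, eval_mul, eval_X] at hS
  push_cast
  linear_combination (norm := ring_nf) hS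

theorem eq_eval_C_of_add_two_eq {a : R} {v : ℕ → R} (h0 : v 0 = 2) (h1 : v 1 = a)
    (h : ∀ p, v (p + 2) = a * v (p + 1) - v p) :
    v = fun p : ℕ => (C R p).eval a := by
  refine eq_of_add_two_eq (b := -1) (fun p => by rw [h]; ring) (fun p => ?_) (by simp [h0])
    (by simp [h1])
  push_cast
  simp only [C_add_two, eval_sub, eval_mul, eval_X]
  ring

end Polynomial.Chebyshev

theorem mul_det_eq_eval_C_sub_two {R : Type*} [CommRing R] (m : R) (τ : ℕ → R)
    (hτ : ∀ p : ℕ, m * τ p = p - (S R ((p : ℤ) - 1)).eval (m + 2)) (n : ℕ) :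
    m * (!![(n : R), τ (n - 1), τ n;
        0, τ n - τ (n - 1), τ (n + 1) - τ n;
        0, (S R ((n : ℤ) - 1)).eval (m + 2), (S R (((n + 1 : ℕ) : ℤ) - 1)).eval (m + 2) - 1]).det
      = n * ((C R n).eval (m + 2) - 2) := by
  rw [Matrix.det_fin_three_block_triangular]
  rcases n with _ | k
  · simp
  have key := congrArg (eval (m + 2)) (C_sub_two_eq_S_minor R ((k : ℤ) + 1))
  simp only [eval_sub, eval_mul, eval_add, eval_one, eval_ofNat] at key
  have h0 := hτ k
  have h1 := hτ (k + 1)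
  have h2 := hτ (k + 2)
  push_cast at h0 h1 h2 ⊢
  linear_combination (norm := ring_nf) ((k : R) + 1) * ((S R (k + 1)).eval (m + 2) - 1) * (h1 - h0)
    - ((k : R) + 1) * (S R k).eval (m + 2) * (h2 - h1) - ((k : R) + 1) * key

theorem stmt17_general (m n : ℕ) (hm : 1 ≤ m) (u v τ : ℕ → ℤ)
    (hu0 : u 0 = 0) (hu1 : u 1 = 1)
    (hurec : ∀ p, 2 ≤ p → u p = (m + 2) * u (p - 1) - u (p - 2))
    (hv0 : v 0 = 2) (hv1 : v 1 = m + 2)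
    (hvrec : ∀ p, 2 ≤ p → v p = (m + 2) * v (p - 1) - v (p - 2))
    (hτ : ∀ p : ℕ, (m : ℤ) * τ p = (p : ℤ) - u p) :
    (m : ℤ) * (!![(n : ℤ), τ (n - 1), τ n;
        0, τ n - τ (n - 1), τ (n + 1) - τ n;
        0, u n, u (n + 1) - 1] : Matrix (Fin 3) (Fin 3) ℤ).det
        = n * (v n - 2) ∧
      (∀ s : ℕ, n = 2 * s + 1 →
        (!![(n : ℤ), τ (n - 1), τ n;
          0, τ n - τ (n - 1), τ (n + 1) - τ n;
          0, u n, u (n + 1) - 1] : Matrix (Fin 3) (Fin 3) ℤ).det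
          = n * (u s + u (s + 1)) ^ 2) ∧
      (∀ s : ℕ, n = 2 * s →
        (!![(n : ℤ), τ (n - 1), τ n;
          0, τ n - τ (n - 1), τ (n + 1) - τ n;
          0, u n, u (n + 1) - 1] : Matrix (Fin 3) (Fin 3) ℤ).det
          = n * (m + 4) * (u s) ^ 2) := by
  have hu : u = fun p : ℕ => (S ℤ ((p : ℤ) - 1)).eval ((m : ℤ) + 2) :=
    eq_eval_S_sub_one_of_add_two_eq hu0 hu1 fun p => by simpa using hurec (p + 2) (by omega)
  have hv : v = fun p : ℕ => (C ℤ p).eval ((m : ℤ) + 2) :=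
    eq_eval_C_of_add_two_eq hv0 hv1 fun p => by simpa using hvrec (p + 2) (by omega)
  subst hu hv
  have hdet := mul_det_eq_eval_C_sub_two (m : ℤ) τ hτ n
  have hm0 : (m : ℤ) ≠ 0 := by positivity
  refine ⟨hdet, fun s hs => mul_left_cancel₀ hm0 ?_, fun s hs => mul_left_cancel₀ hm0 ?_⟩
  · have hC := congrArg (eval ((m : ℤ) + 2)) (C_two_mul_add_one_sub_two ℤ s)
    simp only [eval_sub, eval_mul, eval_add, eval_pow, eval_X, eval_ofNat] at hC
    rw [hdet, hs]
    push_cast at hC ⊢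
    linear_combination (norm := ring_nf) (2 * (s : ℤ) + 1) * hC
  · have hC := congrArg (eval ((m : ℤ) + 2)) (C_two_mul_sub_two ℤ s)
    simp only [eval_sub, eval_mul, eval_pow, eval_X, eval_ofNat] at hC
    rw [hdet, hs]
    push_cast at hC ⊢
    linear_combination (norm := ring_nf) (2 * (s : ℤ)) * hC

/-- `det B = (n/m)·(v n - 2)` for
`B = [[n, τ (n-1), τ n],[0, τ n - τ (n-1), τ (n+1) - τ n],[0, u n, u (n+1) - 1]]`;
in particular `det B = n·(u s + u (s+1))²` when `n = 2s+1`, and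
`det B = n·(m+4)·(u s)²` when `n = 2s`. -/
theorem stmt17 (m n : ℕ) (hm : 1 ≤ m) (hn : 2 ≤ n) (u v τ : ℕ → ℤ)
    (hu0 : u 0 = 0) (hu1 : u 1 = 1)
    (hurec : ∀ p, 2 ≤ p → u p = (m + 2) * u (p - 1) - u (p - 2))
    (hv0 : v 0 = 2) (hv1 : v 1 = m + 2)
    (hvrec : ∀ p, 2 ≤ p → v p = (m + 2) * v (p - 1) - v (p - 2))
    (hτ : ∀ p : ℕ, (m : ℤ) * τ p = (p : ℤ) - u p) :
    (m : ℤ) * (!![(n : ℤ), τ (n - 1), τ n;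
        0, τ n - τ (n - 1), τ (n + 1) - τ n;
        0, u n, u (n + 1) - 1] : Matrix (Fin 3) (Fin 3) ℤ).det
        = n * (v n - 2) ∧
      (∀ s : ℕ, n = 2 * s + 1 →
        (!![(n : ℤ), τ (n - 1), τ n;
          0, τ n - τ (n - 1), τ (n + 1) - τ n;
          0, u n, u (n + 1) - 1] : Matrix (Fin 3) (Fin 3) ℤ).det
          = n * (u s + u (s + 1)) ^ 2) ∧
      (∀ s : ℕ, n = 2 * s →
        (!![(n : ℤ), τ (n - 1), τ n;
          0, τ n - τ (n - 1), τ (n + 1) - τ n;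
          0, u n, u (n + 1) - 1] : Matrix (Fin 3) (Fin 3) ℤ).det
          = n * (m + 4) * (u s) ^ 2) :=
  stmt17_general m n hm u v τ hu0 hu1 hurec hv0 hv1 hvrec hτ
end
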